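/- arXiv:1501.04721 — 3 statements merged into one kernel-verified Lean document; each statement's English description precedes it below -/
import Mathlib

section
/- Let M ≥ 1 and let A be an M×M complex Hermitian matrix with eigenvalues λ_1, …, λ_M (counted with multiplicity). Then there exists an M×M complex Hermitian matrix W* with W*² = W* (an orthogonal-projection matrix) such that: (a) W* ⪰ 0 and W* − W*² ⪰ 0; (b) for every M×M complex Hermitian matrix W satisfying W ⪰ 0 and W − W² ⪰ 0, one has Re Tr(A·W) ≤ Re Tr(A·W*); and (c) Re Tr(A·W*) = Σ_{i=1}^{M} max(λ_i, 0). (In the paper, W* = U*U*† where the columns of U* are orthonormal eigenvectors of A corresponding to its positive eigenvalues; this is the closed-form solution of the decomposed dual subproblem and is the key step proving tightness of the semidefinite relaxation in Theorem 3.) -/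
/-!
The optimum is attained at the spectral projection `W* = U diag(1_{λᵢ > 0}) U†` onto the positive
eigenspaces of `A = U diag(λ) U†`, for which `Tr(A W*) = ∑ max(λᵢ, 0)`. Conversely, for feasible `W`
the conjugate `B = U† W U` is still Hermitian with `B - B² ⪰ 0`, so every `x = Re Bᵢᵢ` satisfies
`x ≥ (B²)ᵢᵢ ≥ x²`, i.e. `x ∈ [0, 1]`; hence `Re Tr(A W) = ∑ λᵢ Re Bᵢᵢ ≤ ∑ max(λᵢ, 0)`.
-/

open Matrix ComplexOrder

namespace Matrix

open Unitary

variable {n 𝕜 : Type*} [Fintype n] [RCLike 𝕜]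

lemma IsHermitian.re_mul_self_apply_self {B : Matrix n n 𝕜} (hB : B.IsHermitian) (i : n) :
    RCLike.re ((B * B) i i) = ∑ j, ‖B i j‖ ^ 2 := by
  simp only [mul_apply, map_sum, ← hB.apply i, RCLike.star_def, RCLike.conj_mul,
    RCLike.norm_conj, ← RCLike.ofReal_pow, RCLike.ofReal_re]

lemma IsHermitian.re_apply_self_sq_le {B : Matrix n n 𝕜} (hB : B.IsHermitian) (i : n) :
    RCLike.re (B i i) ^ 2 ≤ RCLike.re ((B * B) i i) := by
  rw [hB.re_mul_self_apply_self]
  calc RCLike.re (B i i) ^ 2 ≤ ‖B i i‖ ^ 2 := by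
        rw [← sq_abs]; gcongr; exact RCLike.abs_re_le_norm _
    _ ≤ ∑ j, ‖B i j‖ ^ 2 :=
        Finset.single_le_sum (f := fun j => ‖B i j‖ ^ 2) (fun j _ => by positivity)
          (Finset.mem_univ i)

lemma IsHermitian.re_apply_self_mem_Icc {B : Matrix n n 𝕜} (hB : B.IsHermitian)
    (hB' : (B - B * B).PosSemidef) (i : n) : RCLike.re (B i i) ∈ Set.Icc 0 1 := by
  have hle : RCLike.re ((B * B) i i) ≤ RCLike.re (B i i) := by
    have := (RCLike.nonneg_iff.mp (hB'.diag_nonneg (i := i))).1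
    simpa only [sub_apply, map_sub, sub_nonneg] using this
  have := hB.re_apply_self_sq_le i
  constructor <;> nlinarith

variable [DecidableEq n]

lemma PosSemidef.conjStarAlgAut {W : Matrix n n 𝕜} (hW : W.PosSemidef)
    (U : unitaryGroup n 𝕜) : (conjStarAlgAut 𝕜 _ U W).PosSemidef := by
  simpa only [conjStarAlgAut_apply, star_eq_conjTranspose] using
    hW.mul_mul_conjTranspose_same (U : Matrix n n 𝕜)

lemma trace_conjStarAlgAut (U : unitaryGroup n 𝕜) (W : Matrix n n 𝕜) :
    (conjStarAlgAut 𝕜 _ U W).trace = W.trace := by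
  rw [conjStarAlgAut_apply, trace_mul_cycle, coe_star_mul_self, one_mul]

variable {A : Matrix n n 𝕜} (hA : A.IsHermitian)

lemma IsHermitian.trace_mul_eq_sum_eigenvalues_mul (W : Matrix n n 𝕜) :
    (A * W).trace = ∑ i, (hA.eigenvalues i : 𝕜) *
      conjStarAlgAut 𝕜 _ (star hA.eigenvectorUnitary) W i i := by
  rw [← trace_conjStarAlgAut (star hA.eigenvectorUnitary), map_mul,
    conjStarAlgAut_star_eigenvectorUnitary]
  simp only [trace, diag, diagonal_mul, Function.comp_apply]

lemma IsHermitian.re_trace_mul_le_sum_max_eigenvalues_zero {W : Matrix n n 𝕜}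
    (hW : W.IsHermitian) (hW' : (W - W * W).PosSemidef) :
    RCLike.re (A * W).trace ≤ ∑ i, max (hA.eigenvalues i) 0 := by
  set B := conjStarAlgAut 𝕜 _ (star hA.eigenvectorUnitary) W
  have hB : B.IsHermitian := hW.isSelfAdjoint.map _
  have hB' : (B - B * B).PosSemidef := by
    rw [← map_mul, ← map_sub]
    exact hW'.conjStarAlgAut _
  rw [hA.trace_mul_eq_sum_eigenvalues_mul, map_sum]
  refine Finset.sum_le_sum fun i _ => ?_
  obtain ⟨hB0, hB1⟩ := hB.re_apply_self_mem_Icc hB' i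
  rw [RCLike.re_ofReal_mul]
  rcases le_total 0 (hA.eigenvalues i) with h | h
  · exact (mul_le_of_le_one_right h hB1).trans (le_max_left _ _)
  · exact (mul_nonpos_of_nonpos_of_nonneg h hB0).trans (le_max_right _ _)

lemma IsHermitian.cfc_mul_cfc (f g : ℝ → ℝ) : hA.cfc f * hA.cfc g = hA.cfc (f * g) := by
  simp only [IsHermitian.cfc, ← map_mul, diagonal_mul_diagonal]
  congr with i
  simp

lemma IsHermitian.isHermitian_cfc (f : ℝ → ℝ) : (hA.cfc f).IsHermitian :=
  hA.cfc_eq f ▸ cfc_predicate f A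

lemma IsHermitian.posSemidef_cfc {f : ℝ → ℝ} (hf : 0 ≤ f) : (hA.cfc f).PosSemidef :=
  PosSemidef.conjStarAlgAut (PosSemidef.diagonal fun i => by simpa using hf _) _

lemma IsHermitian.trace_mul_cfc (f : ℝ → ℝ) :
    (A * hA.cfc f).trace = ∑ i, ((hA.eigenvalues i * f (hA.eigenvalues i) : ℝ) : 𝕜) := by
  rw [hA.trace_mul_eq_sum_eigenvalues_mul, IsHermitian.cfc, ← conjStarAlgAut_mul_apply]
  simp

end Matrix

theorem stmt0_general (M : ℕ) (A : Matrix (Fin M) (Fin M) ℂ)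
    (hA : A.IsHermitian) :
    ∃ Wstar : Matrix (Fin M) (Fin M) ℂ,
      Wstar.IsHermitian ∧ Wstar * Wstar = Wstar ∧
      Wstar.PosSemidef ∧ (Wstar - Wstar * Wstar).PosSemidef ∧
      (∀ W : Matrix (Fin M) (Fin M) ℂ, W.IsHermitian → W.PosSemidef →
        (W - W * W).PosSemidef → ((A * W).trace).re ≤ ((A * Wstar).trace).re) ∧
      ((A * Wstar).trace).re = ∑ i, max (hA.eigenvalues i) 0 := by
  set f : ℝ → ℝ := fun x => if 0 < x then 1 else 0
  have hff : f * f = f := by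
    ext x
    by_cases hx : 0 < x <;> simp [f, hx]
  have hWW : hA.cfc f * hA.cfc f = hA.cfc f := by rw [hA.cfc_mul_cfc, hff]
  have hval : ((A * hA.cfc f).trace).re = ∑ i, max (hA.eigenvalues i) 0 := by
    rw [hA.trace_mul_cfc, Complex.re_sum]
    refine Finset.sum_congr rfl fun i _ => ?_
    by_cases h : 0 < hA.eigenvalues i
    · simp [f, h, h.le]
    · simp [f, h, le_of_not_gt h]
  refine ⟨hA.cfc f, hA.isHermitian_cfc f, hWW, hA.posSemidef_cfc fun x => ?_, ?_,
    fun W hW _ hW' => hval ▸ hA.re_trace_mul_le_sum_max_eigenvalues_zero hW hW', hval⟩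
  · by_cases hx : 0 < x <;> simp [f, hx]
  · simpa [hWW] using PosSemidef.zero

/-- existence of the optimal projection matrix `W*` maximizing
`Re Tr(A·W)` over Hermitian `W` with `W ⪰ 0` and `W − W² ⪰ 0`, with optimal value
the sum of the positive parts of the eigenvalues of `A`. -/
theorem stmt0 (M : ℕ) (hM : 1 ≤ M) (A : Matrix (Fin M) (Fin M) ℂ)
    (hA : A.IsHermitian) :
    ∃ Wstar : Matrix (Fin M) (Fin M) ℂ,
      Wstar.IsHermitian ∧ Wstar * Wstar = Wstar ∧
      Wstar.PosSemidef ∧ (Wstar - Wstar * Wstar).PosSemidef ∧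
      (∀ W : Matrix (Fin M) (Fin M) ℂ, W.IsHermitian → W.PosSemidef →
        (W - W * W).PosSemidef → ((A * W).trace).re ≤ ((A * Wstar).trace).re) ∧
      ((A * Wstar).trace).re = ∑ i, max (hA.eigenvalues i) 0 :=
  stmt0_general M A hA
end

section
/- Let δ > 0, σ := (√(2δ) + √(2δ + 4))/2, and let t, c be real numbers with t ≥ σ² and (1 − √(2δ)/σ)·t ≥ c. Let Q be an n×n complex Hermitian matrix with 0 ⪯ Q ⪯ I_n and Tr(Q) ≥ t. Then Tr(Q) − √(2δ)·‖Q‖_F ≥ c. (This composite inequality is the deterministic core of Theorem 2: it shows that the quadratic restriction (CC12) forces the Bernstein-type sufficient condition (BC1) to hold.) -/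
/-!
Since `0 ⪯ Q ⪯ I`, the identity `Q - Q² = (I - Q) Q (I - Q) + Q (I - Q) Q` shows `Q² ⪯ Q`, so
`‖Q‖_F² ≤ Tr Q`. With `a = √(2δ)` it therefore suffices to bound `Tr Q - a √(Tr Q)` from below.
The map `x ↦ x - a √x` is nondecreasing once `√x ≥ a / 2`, which holds for `x ≥ t ≥ σ²` as `σ ≥ a / 2`,
and at `x = t` the bound `a √t ≤ (a / σ) t` (from `√t ≥ σ`) gives the value `c`.
-/

open Matrix ComplexOrder

namespace Matrix

variable {n 𝕜 : Type*} [Fintype n] [DecidableEq n] [RCLike 𝕜]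

theorem PosSemidef.sub_conjTranspose_mul_self {Q : Matrix n n 𝕜} (hQ : Q.PosSemidef)
    (hQ' : (1 - Q).PosSemidef) : (Q - Qᴴ * Q).PosSemidef := by
  have hsplit : Q - Qᴴ * Q = (1 - Q) * Q * (1 - Q)ᴴ + Q * (1 - Q) * Qᴴ := by
    simp only [conjTranspose_sub, conjTranspose_one, hQ.isHermitian.eq]
    noncomm_ring
  rw [hsplit]
  exact (hQ.mul_mul_conjTranspose_same _).add (hQ'.mul_mul_conjTranspose_same _)

theorem PosSemidef.trace_conjTranspose_mul_self_le {Q : Matrix n n 𝕜} (hQ : Q.PosSemidef)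
    (hQ' : (1 - Q).PosSemidef) : (Qᴴ * Q).trace ≤ Q.trace := by
  rw [← sub_nonneg, ← trace_sub]
  exact (hQ.sub_conjTranspose_mul_self hQ').trace_nonneg

end Matrix

namespace Real

theorem sub_mul_sqrt_le_sub_mul_sqrt {a x y : ℝ} (hx : 0 ≤ x) (hxy : x ≤ y) (ha : a ≤ 2 * √x) :
    x - a * √x ≤ y - a * √y := by
  have hsqrt : √x ≤ √y := sqrt_le_sqrt hxy
  have hx' : √x ^ 2 = x := sq_sqrt hx
  have hy' : √y ^ 2 = y := sq_sqrt (hx.trans hxy)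
  nlinarith [mul_nonneg (sub_nonneg.2 hsqrt) (by linarith : 0 ≤ √y + √x - a)]

theorem mul_sqrt_le_div_mul {a σ t : ℝ} (ha : 0 ≤ a) (hσ : 0 < σ) (ht : σ ^ 2 ≤ t) :
    a * √t ≤ a / σ * t := by
  have hσt : σ ≤ √t := le_sqrt_of_sq_le ht
  have ht' : √t ^ 2 = t := sq_sqrt ((sq_nonneg σ).trans ht)
  rw [div_mul_eq_mul_div, le_div_iff₀ hσ, mul_assoc]
  exact mul_le_mul_of_nonneg_left (by nlinarith) ha

theorem le_sub_mul_sqrt_of_le {a σ t c T F : ℝ} (ha : 0 ≤ a) (hσ : 0 < σ) (haσ : a ≤ 2 * σ)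
    (ht : σ ^ 2 ≤ t) (hc : c ≤ (1 - a / σ) * t) (hT : t ≤ T) (hF : F ≤ T) :
    c ≤ T - a * √F := by
  have hσt : σ ≤ √t := le_sqrt_of_sq_le ht
  calc c ≤ t - a / σ * t := by linarith
    _ ≤ t - a * √t := by linarith [mul_sqrt_le_div_mul ha hσ ht]
    _ ≤ T - a * √T :=
        sub_mul_sqrt_le_sub_mul_sqrt ((sq_nonneg σ).trans ht) hT (by linarith)
    _ ≤ T - a * √F := by gcongr

end Real

theorem stmt9_general (n : ℕ) (δ σ t c : ℝ) (hδ : 0 < δ)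
    (hσ : σ = (Real.sqrt (2 * δ) + Real.sqrt (2 * δ + 4)) / 2)
    (ht : σ ^ 2 ≤ t) (htc : c ≤ (1 - Real.sqrt (2 * δ) / σ) * t)
    (Q : Matrix (Fin n) (Fin n) ℂ)
    (hQ0 : Q.PosSemidef) (hQ1 : ((1 : Matrix (Fin n) (Fin n) ℂ) - Q).PosSemidef)
    (hTr : t ≤ (Q.trace).re) :
    c ≤ (Q.trace).re - Real.sqrt (2 * δ) * Real.sqrt (((Qᴴ * Q).trace).re) := by
  have hsqrt₄ : 0 < √(2 * δ + 4) := Real.sqrt_pos.2 (by linarith)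
  have hσ₀ : 0 < σ := by rw [hσ]; positivity
  have haσ : √(2 * δ) ≤ 2 * σ := by rw [hσ]; linarith
  have hF : ((Qᴴ * Q).trace).re ≤ (Q.trace).re :=
    (Complex.le_def.1 (hQ0.trace_conjTranspose_mul_self_le hQ1)).1
  exact Real.le_sub_mul_sqrt_of_le (Real.sqrt_nonneg _) hσ₀ haσ ht htc hTr hF

/-- deterministic core of Theorem 2: if `t ≥ σ²`,
`(1 − √(2δ)/σ)·t ≥ c`, and `Q` is Hermitian with `0 ⪯ Q ⪯ I` and `Tr(Q) ≥ t`,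
then `Tr(Q) − √(2δ)·‖Q‖_F ≥ c`, where `‖Q‖_F = √(Tr(Q†Q))`. -/
theorem stmt9 (n : ℕ) (δ σ t c : ℝ) (hδ : 0 < δ)
    (hσ : σ = (Real.sqrt (2 * δ) + Real.sqrt (2 * δ + 4)) / 2)
    (ht : σ ^ 2 ≤ t) (htc : c ≤ (1 - Real.sqrt (2 * δ) / σ) * t)
    (Q : Matrix (Fin n) (Fin n) ℂ) (hQ : Q.IsHermitian)
    (hQ0 : Q.PosSemidef) (hQ1 : ((1 : Matrix (Fin n) (Fin n) ℂ) - Q).PosSemidef)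
    (hTr : t ≤ (Q.trace).re) :
    c ≤ (Q.trace).re - Real.sqrt (2 * δ) * Real.sqrt (((Qᴴ * Q).trace).re) :=
  stmt9_general n δ σ t c hδ hσ ht htc Q hQ0 hQ1 hTr
end

section
/- Zero-forcing projection identity: let h_1, …, h_K ∈ ℂ^S, let H be the K×S complex matrix whose k-th row is h_k† (the conjugate transpose of h_k), and suppose HH† is invertible. For each k, let c_k ∈ ℂ^S be the k-th column of H†(HH†)⁻¹ and let d_k := ((HH†)⁻¹)_{kk}. Then d_k is a positive real number, d_k = ‖c_k‖², and the orthogonal projection of h_k onto the orthogonal complement of span{h_j : j ≠ k} in ℂ^S equals d_k⁻¹ · c_k. (This identifies the unnormalized ZF inner precoding vector of user k with the corresponding column of the channel pseudo-inverse.) -/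
/-! The columns `c_k` of `H†(HH†)⁻¹` form the dual family `c_k = ∑ⱼ (G⁻¹)ⱼₖ hⱼ` of the `hⱼ`
with respect to their Gram matrix `G = HH†`, so `⟪hⱼ, c_k⟫ = δⱼₖ` and `‖c_k‖² = (G⁻¹)ₖₖ`.
Thus `c_k ∈ Uᗮ` for `U = span {hⱼ : j ≠ k}`, and writing `c_k = a hₖ + u` with `u ∈ U` gives
`‖c_k‖² = ⟪c_k, c_k⟫ = conj a`, so `hₖ - ‖c_k‖⁻² c_k = -a⁻¹ u ∈ U`. -/

open Matrix Submodule
open scoped InnerProductSpace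

section

variable {𝕜 E ι : Type*} [RCLike 𝕜] [NormedAddCommGroup E] [InnerProductSpace 𝕜 E]

omit [NormedAddCommGroup E] in
lemma range_eq_insert_setOf_ne (v : ι → E) (k : ι) :
    Set.range v = insert (v k) {x | ∃ j, j ≠ k ∧ x = v j} := by
  ext x
  constructor
  · rintro ⟨j, rfl⟩
    by_cases hj : j = k
    · exact Or.inl (hj ▸ rfl)
    · exact Or.inr ⟨j, hj, rfl⟩
  · rintro (rfl | ⟨j, -, rfl⟩) <;> exact ⟨_, rfl⟩

theorem starProjection_orthogonal_span_ne_eq {v : ι → E} {k : ι} {c : E}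
    [(span 𝕜 {x | ∃ j, j ≠ k ∧ x = v j})ᗮ.HasOrthogonalProjection]
    (hne : ∀ j ≠ k, ⟪v j, c⟫_𝕜 = 0) (hk : ⟪v k, c⟫_𝕜 = 1) (hspan : c ∈ span 𝕜 (Set.range v)) :
    (span 𝕜 {x | ∃ j, j ≠ k ∧ x = v j})ᗮ.starProjection (v k) = ((‖c‖ ^ 2 : ℝ) : 𝕜)⁻¹ • c := by
  set U := span 𝕜 {x | ∃ j, j ≠ k ∧ x = v j}
  have hcU : c ∈ Uᗮ :=
    (isOrtho_span.2 <| by rintro _ ⟨j, hj, rfl⟩ _ rfl; exact hne j hj).symm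
      (mem_span_singleton_self c)
  rw [range_eq_insert_setOf_ne v k, mem_span_insert] at hspan
  obtain ⟨a, u, hu, hc⟩ := hspan
  have ha : ((‖c‖ ^ 2 : ℝ) : 𝕜) = a := by
    have : ⟪c, c⟫_𝕜 = star a := by
      rw [hc, inner_add_left, inner_smul_left, ← hc, hk, inner_right_of_mem_orthogonal hu hcU]
      simp
    push_cast
    rw [← inner_self_eq_norm_sq_to_K, ← inner_self_conj, this]
    exact star_star a
  have ha0 : a ≠ 0 := by
    have : c ≠ 0 := by rintro rfl; simp at hk
    rw [← ha]
    exact_mod_cast pow_ne_zero 2 (norm_ne_zero_iff.2 this)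
  refine eq_starProjection_of_mem_orthogonal (smul_mem _ _ hcU) (le_orthogonal_orthogonal U ?_)
  have : v k - a⁻¹ • c = -(a⁻¹ • u) := by
    rw [hc, smul_add, smul_smul, inv_mul_cancel₀ ha0, one_smul]; abel
  rw [ha, this]
  exact neg_mem (smul_mem _ _ hu)

lemma mul_conjTranspose_eq_gram {σ : Type*} [Fintype σ] {h : ι → EuclideanSpace 𝕜 σ}
    {H : Matrix ι σ 𝕜} (hH : ∀ k i, H k i = star (h k i)) : H * Hᴴ = gram 𝕜 h := by
  ext i j
  simp [mul_apply, hH, PiLp.inner_apply, mul_comm]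

variable [Fintype ι] [DecidableEq ι]

variable (𝕜) in
noncomputable def gramDual (v : ι → E) (k : ι) : E := ∑ j, (gram 𝕜 v)⁻¹ j k • v j

lemma gramDual_mem_span (v : ι → E) (k : ι) : gramDual 𝕜 v k ∈ span 𝕜 (Set.range v) :=
  sum_smul_mem _ _ fun j _ => subset_span ⟨j, rfl⟩

lemma inner_gramDual {v : ι → E} (hG : IsUnit (gram 𝕜 v)) (i k : ι) :
    ⟪v i, gramDual 𝕜 v k⟫_𝕜 = (1 : Matrix ι ι 𝕜) i k := by
  rw [← mul_nonsing_inv _ ((isUnit_iff_isUnit_det _).1 hG), mul_apply, gramDual, inner_sum]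
  simp_rw [inner_smul_right, gram_apply, mul_comm]

lemma inner_self_gramDual {v : ι → E} (hG : IsUnit (gram 𝕜 v)) (k : ι) :
    ⟪gramDual 𝕜 v k, gramDual 𝕜 v k⟫_𝕜 = (gram 𝕜 v)⁻¹ k k := by
  nth_rw 1 [gramDual]
  simp_rw [sum_inner, inner_smul_left, inner_gramDual hG, one_apply, mul_ite, mul_one, mul_zero,
    Finset.sum_ite_eq', Finset.mem_univ, if_true]
  exact (isHermitian_gram 𝕜 v).inv.apply k k

lemma gramDual_apply {σ : Type*} [Fintype σ] {h : ι → EuclideanSpace 𝕜 σ}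
    {H : Matrix ι σ 𝕜} (hH : ∀ k i, H k i = star (h k i)) (k : ι) (i : σ) :
    gramDual 𝕜 h k i = (Hᴴ * (H * Hᴴ)⁻¹) i k := by
  simp [gramDual, mul_conjTranspose_eq_gram hH, mul_apply, hH, mul_comm]

end

/-- zero-forcing projection identity. With `H` the matrix whose
`k`-th row is `h_k†`, `HH†` invertible, `c_k` the `k`-th column of `H†(HH†)⁻¹`
and `d_k = ((HH†)⁻¹)_{kk}`: `d_k` is a positive real, `d_k = ‖c_k‖²`, and the
orthogonal projection of `h_k` onto the orthogonal complement of
`span{h_j : j ≠ k}` equals `d_k⁻¹ • c_k`. -/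
theorem stmt18 (K S : ℕ) (h : Fin K → EuclideanSpace ℂ (Fin S))
    (H : Matrix (Fin K) (Fin S) ℂ) (hH : ∀ k i, H k i = star (h k i))
    (hinv : IsUnit (H * Hᴴ))
    (c : Fin K → EuclideanSpace ℂ (Fin S))
    (hc : ∀ k i, c k i = (Hᴴ * (H * Hᴴ)⁻¹) i k)
    (d : Fin K → ℂ) (hd : ∀ k, d k = (H * Hᴴ)⁻¹ k k) :
    ∀ k, (d k).im = 0 ∧ 0 < (d k).re ∧ d k = ((‖c k‖ ^ 2 : ℝ) : ℂ) ∧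
      ((Submodule.orthogonalProjection
          ((Submodule.span ℂ {x | ∃ j, j ≠ k ∧ x = h j})ᗮ) (h k) :
        EuclideanSpace ℂ (Fin S)) = (d k)⁻¹ • c k) := by
  intro k
  obtain rfl : c = gramDual ℂ h := funext fun k => PiLp.ext fun i => by rw [hc, gramDual_apply hH]
  rw [mul_conjTranspose_eq_gram hH] at hinv hd
  have hnorm : d k = ((‖gramDual ℂ h k‖ ^ 2 : ℝ) : ℂ) := by
    rw [hd, ← inner_self_gramDual hinv, inner_self_eq_norm_sq_to_K]
    norm_cast
  have hpos : 0 < ‖gramDual ℂ h k‖ :=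
    norm_pos_iff.2 fun h0 => by simpa [h0] using inner_gramDual hinv k k
  refine ⟨by rw [hnorm]; exact Complex.ofReal_im _, by rw [hnorm, Complex.ofReal_re]; positivity,
    hnorm, ?_⟩
  rw [← starProjection_apply, hnorm]
  exact starProjection_orthogonal_span_ne_eq (fun j hj => (inner_gramDual hinv j k).trans
    (one_apply_ne hj)) ((inner_gramDual hinv k k).trans (one_apply_eq k)) (gramDual_mem_span h k)
end
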